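/- The operators θ̃_i := π̃_i − 1 satisfy θ̃_i² = −θ̃_i, θ̃_i θ̃_j = θ̃_j θ̃_i for |i−j| > 1, and the braid relations θ̃_i θ̃_{i+1} θ̃_i = θ̃_{i+1} θ̃_i θ̃_{i+1}. -/

import Mathlib

/-!
If `βᵢ₊₁ ≠ 0`, both exponents of `xᵢ x^β` at `i, i+1` are nonzero, so `s̃ᵢ` fixes it and
`π̃ᵢ x^β = 0`. If `βᵢ₊₁ = 0`, then `xᵢ x^β - s̃ᵢ(xᵢ x^β) = x^γ (xᵢ^(a+1) - xᵢ₊₁^(a+1))` with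
`a = βᵢ`, so `π̃ᵢ x^β = x^γ ∑_{p+q=a} xᵢ^p xᵢ₊₁^q`. Thus `π̃ᵢ` is an explicit linear operator
`piTilde`, and `PRel` pins it down because `xᵢ - xᵢ₊₁` is a nonzerodivisor.

The relations for `θ̃ᵢ = π̃ᵢ - 1` follow by pure ring algebra from `π̃ᵢ² = π̃ᵢ`, from the
commutation of `π̃ᵢ` and `π̃ⱼ` for `|i - j| > 1`, and from the braid relation
`π̃ᵢ π̃ᵢ₊₁ π̃ᵢ = π̃ᵢ₊₁ π̃ᵢ π̃ᵢ₊₁`. Both sides of the latter kill `x^β` unless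
`βᵢ₊₁ = βᵢ₊₂ = 0`, and then both give the sum of all ways of distributing `βᵢ` over the positions
`i, i+1, i+2`.
-/

open MvPolynomial

/-- Hivert's quasisymmetric swap on exponent vectors: exchange the exponents in
positions `i` and `i+1` if one of them is zero, otherwise do nothing. -/
noncomputable def tswapE (n i : ℕ) (hi : i + 1 < n) (β : Fin n →₀ ℕ) : Fin n →₀ ℕ :=
  if β ⟨i, by omega⟩ = 0 ∨ β ⟨i + 1, hi⟩ = 0 then
    β.equivMapDomain (Equiv.swap (⟨i, by omega⟩ : Fin n) ⟨i + 1, hi⟩)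
  else β

/-- Hivert's quasisymmetric action `s̃ᵢ` on polynomials, acting monomial-wise by
`s̃ᵢ(x^β) = x^(s̃ᵢ β)` and extended linearly. -/
noncomputable def stilde (n i : ℕ) (hi : i + 1 < n) (f : MvPolynomial (Fin n) ℂ) :
    MvPolynomial (Fin n) ℂ :=
  f.support.sum fun β => monomial (tswapE n i hi β) (coeff β f)

/-- `PRel n i hi f g` encodes `π̃ᵢ f = g`, where
`π̃ᵢ f = (xᵢ f - s̃ᵢ(xᵢ f))/(xᵢ - xᵢ₊₁)`; the relation
`(xᵢ - xᵢ₊₁) * g = xᵢ f - s̃ᵢ(xᵢ f)` determines `g` uniquely.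
Then `θ̃ᵢ f = g - f` (i.e. `θ̃ᵢ = π̃ᵢ - id`). -/
def PRel (n i : ℕ) (hi : i + 1 < n) (f g : MvPolynomial (Fin n) ℂ) : Prop :=
  (X ⟨i, by omega⟩ - X ⟨i + 1, hi⟩) * g
    = X ⟨i, by omega⟩ * f - stilde n i hi (X ⟨i, by omega⟩ * f)

open Finset

noncomputable def updatePair {σ : Type*} (u v : σ) (β : σ →₀ ℕ) (p : ℕ × ℕ) : σ →₀ ℕ :=
  (β.update u p.1).update v p.2

section UpdatePair

variable {σ : Type*} [DecidableEq σ] {u v : σ} {β : σ →₀ ℕ} {p : ℕ × ℕ}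

lemma updatePair_apply (x : σ) :
    updatePair u v β p x = if x = v then p.2 else if x = u then p.1 else β x := by
  simp [updatePair, Finsupp.update_apply]

lemma updatePair_apply_right : updatePair u v β p v = p.2 := by
  simp [updatePair_apply]

lemma updatePair_apply_left (huv : u ≠ v) : updatePair u v β p u = p.1 := by
  simp [updatePair_apply, huv]

lemma updatePair_apply_of_ne {x : σ} (hu : x ≠ u) (hv : x ≠ v) :
    updatePair u v β p x = β x := by
  simp [updatePair_apply, hu, hv]

lemma updatePair_eq_self (hu : β u = p.1) (hv : β v = p.2) : updatePair u v β p = β := by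
  ext x
  simp only [updatePair_apply]
  split_ifs <;> simp_all

lemma updatePair_updatePair (q : ℕ × ℕ) :
    updatePair u v (updatePair u v β p) q = updatePair u v β q := by
  ext x
  simp only [updatePair_apply]
  split_ifs <;> rfl

lemma updatePair_comm {u' v' : σ} (h₁ : u ≠ u') (h₂ : u ≠ v') (h₃ : v ≠ u') (h₄ : v ≠ v')
    (q : ℕ × ℕ) :
    updatePair u v (updatePair u' v' β q) p = updatePair u' v' (updatePair u v β p) q := by
  ext x
  simp only [updatePair_apply]
  split_ifs <;> simp_all

end UpdatePair

lemma sum_antidiagonal_antidiagonal_fst_eq_snd {M : Type*} [AddCommMonoid M] (a : ℕ)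
    (g : ℕ → ℕ → ℕ → M) :
    ∑ p ∈ antidiagonal a, ∑ q ∈ antidiagonal p.1, g q.1 q.2 p.2
      = ∑ p ∈ antidiagonal a, ∑ q ∈ antidiagonal p.2, g p.1 q.1 q.2 := by
  rw [sum_sigma', sum_sigma']
  refine sum_nbij' (fun x => ⟨(x.2.1, x.2.2 + x.1.2), (x.2.2, x.1.2)⟩)
    (fun x => ⟨(x.1.1 + x.2.1, x.2.2), (x.1.1, x.2.1)⟩) ?_ ?_ ?_ ?_ fun _ _ => rfl <;>
  · rintro ⟨⟨_, _⟩, ⟨_, _⟩⟩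
    simp only [mem_sigma, HasAntidiagonal.mem_antidiagonal, Sigma.mk.injEq, Prod.mk.injEq,
      heq_eq_eq, true_and, and_true]
    omega

section PiTilde

variable {σ R : Type*} [CommSemiring R] {u v w : σ} {β : σ →₀ ℕ}

noncomputable def piTilde (u v : σ) : Module.End R (MvPolynomial σ R) :=
  (basisMonomials σ R).constr R fun β =>
    if β v = 0 then ∑ p ∈ antidiagonal (β u), monomial (updatePair u v β p) 1 else 0

lemma piTilde_monomial (β : σ →₀ ℕ) (c : R) :
    piTilde u v (monomial β c) =
      if β v = 0 then ∑ p ∈ antidiagonal (β u), monomial (updatePair u v β p) c else 0 := by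
  have hβ : monomial β c = c • basisMonomials σ R β := by
    rw [coe_basisMonomials, smul_monomial, smul_eq_mul, mul_one]
  rw [hβ, map_smul, piTilde, Module.Basis.constr_basis]
  split_ifs <;> simp [smul_sum, smul_monomial]

lemma piTilde_monomial_of_eq_zero (hv : β v = 0) (c : R) :
    piTilde u v (monomial β c) = ∑ p ∈ antidiagonal (β u), monomial (updatePair u v β p) c := by
  rw [piTilde_monomial, if_pos hv]

lemma piTilde_monomial_of_ne_zero (hv : β v ≠ 0) (c : R) :
    piTilde u v (monomial β c) = 0 := by
  rw [piTilde_monomial, if_neg hv]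

lemma piTilde_piTilde_monomial_of_ne_zero (u' : σ) (hwu : w ≠ u) (hwv : w ≠ v)
    (hw : β w ≠ 0) (c : R) :
    piTilde u' w (piTilde u v (monomial β c)) = 0 := by
  classical
  rw [piTilde_monomial]
  split_ifs
  · rw [map_sum]
    exact sum_eq_zero fun p _ =>
      piTilde_monomial_of_ne_zero (by rwa [updatePair_apply_of_ne hwu hwv]) c
  · exact map_zero _

lemma linearMap_ext_monomial_one {M : Type*} [AddCommMonoid M] [Module R M]
    {f g : MvPolynomial σ R →ₗ[R] M} (h : ∀ β, f (monomial β 1) = g (monomial β 1)) : f = g :=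
  (basisMonomials σ R).ext fun β => by simpa [coe_basisMonomials] using h β

lemma isIdempotentElem_piTilde : IsIdempotentElem (piTilde u v : Module.End R _) := by
  classical
  refine linearMap_ext_monomial_one fun β => ?_
  rw [Module.End.mul_apply]
  by_cases hv : β v = 0
  · rw [piTilde_monomial_of_eq_zero hv, map_sum, sum_eq_single (β u, 0)]
    · rw [updatePair_eq_self rfl hv, piTilde_monomial_of_eq_zero hv]
    · rintro p hp hne
      refine piTilde_monomial_of_ne_zero ?_ 1
      rw [HasAntidiagonal.mem_antidiagonal] at hp
      rw [updatePair_apply_right]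
      contrapose! hne
      exact Prod.ext (by omega) hne
    · exact fun h => absurd (HasAntidiagonal.mem_antidiagonal.2 (add_zero _)) h
  · rw [piTilde_monomial_of_ne_zero hv, map_zero]

lemma piTilde_piTilde_monomial_of_disjoint {u' v' : σ} (h₁ : u ≠ u') (h₂ : u ≠ v')
    (h₃ : v ≠ u') (h₄ : v ≠ v') (hv : β v = 0) (hv' : β v' = 0) (c : R) :
    piTilde u v (piTilde u' v' (monomial β c)) =
      ∑ q ∈ antidiagonal (β u'), ∑ p ∈ antidiagonal (β u),
        monomial (updatePair u v (updatePair u' v' β q) p) c := by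
  classical
  rw [piTilde_monomial_of_eq_zero hv', map_sum]
  refine sum_congr rfl fun q _ => ?_
  rw [piTilde_monomial_of_eq_zero (by rwa [updatePair_apply_of_ne h₃ h₄]),
    updatePair_apply_of_ne h₁ h₂]

lemma commute_piTilde {u' v' : σ} (h₁ : u ≠ u') (h₂ : u ≠ v') (h₃ : v ≠ u') (h₄ : v ≠ v') :
    Commute (piTilde u v : Module.End R (MvPolynomial σ R)) (piTilde u' v') := by
  classical
  refine linearMap_ext_monomial_one fun β => ?_
  simp only [Module.End.mul_apply]
  by_cases hv : β v = 0
  · by_cases hv' : β v' = 0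
    · rw [piTilde_piTilde_monomial_of_disjoint h₁ h₂ h₃ h₄ hv hv',
        piTilde_piTilde_monomial_of_disjoint h₁.symm h₃.symm h₂.symm h₄.symm hv' hv, sum_comm]
      simp only [updatePair_comm h₁ h₂ h₃ h₄]
    · rw [piTilde_piTilde_monomial_of_ne_zero u' h₂.symm h₄.symm hv',
        piTilde_monomial_of_ne_zero hv', map_zero]
  · rw [piTilde_piTilde_monomial_of_ne_zero u h₃ h₄ hv,
      piTilde_monomial_of_ne_zero hv, map_zero]

lemma piTilde_braid_left_monomial (huv : u ≠ v) (hvw : v ≠ w) (huw : u ≠ w) (hv : β v = 0)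
    (hw : β w = 0) (c : R) :
    piTilde u v (piTilde v w (piTilde u v (monomial β c))) =
      ∑ p ∈ antidiagonal (β u), ∑ q ∈ antidiagonal p.1,
        monomial (updatePair v w (β.update u q.1) (q.2, p.2)) c := by
  classical
  rw [piTilde_monomial_of_eq_zero hv, map_sum, map_sum]
  refine sum_congr rfl fun p _ => ?_
  rw [piTilde_monomial_of_eq_zero (by rwa [updatePair_apply_of_ne huw.symm hvw.symm]),
    updatePair_apply_right, map_sum, sum_eq_single (0, p.2)]
  · rw [piTilde_monomial_of_eq_zero (updatePair_apply_left hvw),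
      updatePair_apply_of_ne huv huw, updatePair_apply_left huv]
    refine sum_congr rfl fun q _ => congrArg (monomial · c) ?_
    ext x
    simp only [updatePair_apply, Finsupp.update_apply]
    split_ifs <;> simp_all
  · rintro q hq hne
    refine piTilde_monomial_of_ne_zero ?_ c
    rw [updatePair_apply_left hvw]
    rw [HasAntidiagonal.mem_antidiagonal] at hq
    contrapose! hne
    exact Prod.ext hne (by omega)
  · exact fun h => absurd (HasAntidiagonal.mem_antidiagonal.2 (zero_add _)) h

lemma piTilde_braid_right_monomial (hvw : v ≠ w) (huw : u ≠ w) (hv : β v = 0)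
    (hw : β w = 0) (c : R) :
    piTilde v w (piTilde u v (piTilde v w (monomial β c))) =
      ∑ p ∈ antidiagonal (β u), ∑ q ∈ antidiagonal p.2,
        monomial (updatePair v w (β.update u p.1) q) c := by
  classical
  rw [piTilde_monomial_of_eq_zero hw, hv, Nat.antidiagonal_zero, sum_singleton,
    updatePair_eq_self hv hw, piTilde_monomial_of_eq_zero hv, map_sum]
  refine sum_congr rfl fun p _ => ?_
  rw [piTilde_monomial_of_eq_zero (by rwa [updatePair_apply_of_ne huw.symm hvw.symm]),
    updatePair_apply_right]
  refine sum_congr rfl fun q _ => congrArg (monomial · c) ?_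
  ext x
  simp only [updatePair_apply, Finsupp.update_apply]
  split_ifs <;> simp_all

lemma piTilde_braid (huv : u ≠ v) (hvw : v ≠ w) (huw : u ≠ w) :
    (piTilde u v * piTilde v w * piTilde u v : Module.End R (MvPolynomial σ R)) =
      piTilde v w * piTilde u v * piTilde v w := by
  classical
  refine linearMap_ext_monomial_one fun β => ?_
  simp only [Module.End.mul_apply]
  by_cases hw : β w = 0
  · by_cases hv : β v = 0
    · rw [piTilde_braid_left_monomial huv hvw huw hv hw,
        piTilde_braid_right_monomial hvw huw hv hw]
      exact sum_antidiagonal_antidiagonal_fst_eq_snd _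
        fun x y z => monomial (updatePair v w (β.update u x) (y, z)) 1
    · rw [piTilde_monomial_of_ne_zero hv, map_zero, map_zero, piTilde_monomial_of_eq_zero hw,
        map_sum, map_sum]
      refine (sum_eq_zero fun q hq => ?_).symm
      by_cases hq₂ : q.2 = 0
      · rw [HasAntidiagonal.mem_antidiagonal] at hq
        rw [piTilde_monomial_of_ne_zero (by rw [updatePair_apply_left hvw]; omega), map_zero]
      · exact piTilde_piTilde_monomial_of_ne_zero v huw.symm hvw.symm
          (by rwa [updatePair_apply_right]) 1
  · rw [piTilde_piTilde_monomial_of_ne_zero v huw.symm hvw.symm hw,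
      piTilde_monomial_of_ne_zero hw, map_zero, map_zero]

end PiTilde

section Ring

variable {A : Type*} [Ring A] {a b : A}

lemma IsIdempotentElem.sub_one_mul_self (ha : IsIdempotentElem a) :
    (a - 1) * (a - 1) = -(a - 1) := by
  rw [← neg_sub 1 a, neg_mul_neg, ha.one_sub.eq, neg_neg]

lemma IsIdempotentElem.sub_one_braid (ha : IsIdempotentElem a) (hb : IsIdempotentElem b)
    (hab : a * b * a = b * a * b) :
    (a - 1) * (b - 1) * (a - 1) = (b - 1) * (a - 1) * (b - 1) := by
  have expand : ∀ x y : A,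
      (x - 1) * (y - 1) * (x - 1) = x * y * x - x * y - y * x - x * x + x + x + y - 1 := by
    intro x y
    noncomm_ring
  rw [expand, expand, ha.eq, hb.eq, hab]
  abel

end Ring

section Telescoping

variable {σ R : Type*} [CommRing R] {u v : σ}

lemma X_mul_monomial_updatePair_left (huv : u ≠ v) (β : σ →₀ ℕ) (p : ℕ × ℕ) (c : R) :
    X u * monomial (updatePair u v β p) c = monomial (updatePair u v β (p.1 + 1, p.2)) c := by
  classical
  rw [← pow_one (X u), ← monomial_single_add]
  congr 2
  ext x
  simp only [Finsupp.add_apply, Finsupp.single_apply, updatePair_apply]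
  split_ifs <;> grind

lemma X_mul_monomial_updatePair_right (β : σ →₀ ℕ) (p : ℕ × ℕ) (c : R) :
    X v * monomial (updatePair u v β p) c = monomial (updatePair u v β (p.1, p.2 + 1)) c := by
  classical
  rw [← pow_one (X v), ← monomial_single_add]
  congr 2
  ext x
  simp only [Finsupp.add_apply, Finsupp.single_apply, updatePair_apply]
  split_ifs <;> grind

lemma X_sub_X_mul_sum_antidiagonal (huv : u ≠ v) (β : σ →₀ ℕ) (a : ℕ) (c : R) :
    (X u - X v) * ∑ p ∈ antidiagonal a, monomial (updatePair u v β p) c =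
      monomial (updatePair u v β (a + 1, 0)) c - monomial (updatePair u v β (0, a + 1)) c := by
  rw [sub_mul, mul_sum, mul_sum]
  simp only [X_mul_monomial_updatePair_left huv, X_mul_monomial_updatePair_right]
  have h₁ := Nat.sum_antidiagonal_succ (n := a) (f := fun p => monomial (updatePair u v β p) c)
  have h₂ := Nat.sum_antidiagonal_succ' (n := a) (f := fun p => monomial (updatePair u v β p) c)
  linear_combination h₂ - h₁

end Telescoping

section Stilde

variable {n i : ℕ} {hi : i + 1 < n}

lemma tswapE_of_eq_zero {β : Fin n →₀ ℕ} (h : β ⟨i, by omega⟩ = 0 ∨ β ⟨i + 1, hi⟩ = 0) :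
    tswapE n i hi β =
      updatePair ⟨i, by omega⟩ ⟨i + 1, hi⟩ β (β ⟨i + 1, hi⟩, β ⟨i, by omega⟩) := by
  classical
  rw [tswapE, if_pos h]
  ext x
  rw [Finsupp.equivMapDomain_apply, Equiv.symm_swap, Equiv.swap_apply_def, updatePair_apply]
  split_ifs <;> simp_all [Fin.ext_iff]

lemma tswapE_of_ne_zero {β : Fin n →₀ ℕ} (hu : β ⟨i, by omega⟩ ≠ 0) (hv : β ⟨i + 1, hi⟩ ≠ 0) :
    tswapE n i hi β = β := by
  rw [tswapE, if_neg (not_or.2 ⟨hu, hv⟩)]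

lemma stilde_add (f g : MvPolynomial (Fin n) ℂ) :
    stilde n i hi (f + g) = stilde n i hi f + stilde n i hi g :=
  Finsupp.sum_add_index' (fun _ => map_zero _) fun _ _ _ => map_add _ _ _

lemma stilde_monomial (β : Fin n →₀ ℕ) (c : ℂ) :
    stilde n i hi (monomial β c) = monomial (tswapE n i hi β) c :=
  Finsupp.sum_single_index (map_zero _)

lemma prel_piTilde (f : MvPolynomial (Fin n) ℂ) :
    PRel n i hi f (piTilde ⟨i, by omega⟩ ⟨i + 1, hi⟩ f) := by
  classical
  unfold PRel
  set u : Fin n := ⟨i, by omega⟩ with hu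
  set v : Fin n := ⟨i + 1, hi⟩ with hv
  have huv : u ≠ v := by simp [u, v, Fin.ext_iff]
  induction f using MvPolynomial.induction_on' with
  | monomial β c =>
    have hXβ : X u * monomial β c = monomial (updatePair u v β (β u + 1, β v)) c := by
      rw [← X_mul_monomial_updatePair_left huv β (β u, β v), updatePair_eq_self rfl rfl]
    rw [hXβ, stilde_monomial]
    by_cases hβv : β v = 0
    · rw [tswapE_of_eq_zero (Or.inr (updatePair_apply_right.trans hβv)), ← hu, ← hv,
        piTilde_monomial_of_eq_zero hβv, X_sub_X_mul_sum_antidiagonal huv, hβv,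
        updatePair_apply_right, updatePair_apply_left huv, updatePair_updatePair]
    · rw [tswapE_of_ne_zero (by rw [← hu, updatePair_apply_left huv]; omega)
          (by rwa [← hv, updatePair_apply_right]),
        piTilde_monomial_of_ne_zero hβv, mul_zero, sub_self]
  | add p q hp hq =>
    rw [map_add, mul_add, mul_add, stilde_add]
    linear_combination hp + hq

lemma PRel.eq_piTilde {f g : MvPolynomial (Fin n) ℂ} (h : PRel n i hi f g) :
    g = piTilde ⟨i, by omega⟩ ⟨i + 1, hi⟩ f :=
  mul_left_cancel₀ (sub_ne_zero.2 (X_injective.ne (by simp [Fin.ext_iff])))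
    (h.trans (prel_piTilde f).symm)

end Stilde

/-- The operators `θ̃ᵢ := π̃ᵢ − 1` satisfy `θ̃ᵢ² = −θ̃ᵢ`,
`θ̃ᵢ θ̃ⱼ = θ̃ⱼ θ̃ᵢ` for `|i−j| > 1`, and the braid relations
`θ̃ᵢ θ̃ᵢ₊₁ θ̃ᵢ = θ̃ᵢ₊₁ θ̃ᵢ θ̃ᵢ₊₁`.  Throughout, `θ̃ᵢ f` is expressed as `g - f`
where `PRel n i hi f g`. -/
theorem thetatilde_relations (n : ℕ) :
    (∀ (i : ℕ) (hi : i + 1 < n) (f g h : MvPolynomial (Fin n) ℂ),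
      PRel n i hi f g → PRel n i hi (g - f) h →
      h - (g - f) = -(g - f)) ∧
    (∀ (i j : ℕ) (hi : i + 1 < n) (hj : j + 1 < n), (i + 1 < j ∨ j + 1 < i) →
      ∀ f a b a' b' : MvPolynomial (Fin n) ℂ,
      PRel n i hi f a → PRel n j hj (a - f) b →
      PRel n j hj f a' → PRel n i hi (a' - f) b' →
      b - (a - f) = b' - (a' - f)) ∧
    (∀ (i : ℕ) (hi : i + 2 < n) (f a b c a' b' c' : MvPolynomial (Fin n) ℂ),
      PRel n i (by omega) f a → PRel n (i + 1) hi (a - f) b →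
      PRel n i (by omega) (b - (a - f)) c →
      PRel n (i + 1) hi f a' → PRel n i (by omega) (a' - f) b' →
      PRel n (i + 1) hi (b' - (a' - f)) c' →
      c - (b - (a - f)) = c' - (b' - (a' - f))) := by
  refine ⟨fun i hi f g h hg hh => ?_, fun i j hi hj hij f a b a' b' ha hb ha' hb' => ?_,
    fun i hi f a b c a' b' c' ha hb hc ha' hb' hc' => ?_⟩
  · obtain rfl := hg.eq_piTilde
    obtain rfl := hh.eq_piTilde
    simpa using LinearMap.congr_fun (isIdempotentElem_piTilde (R := ℂ)).sub_one_mul_self f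
  · obtain rfl := ha.eq_piTilde
    obtain rfl := hb.eq_piTilde
    obtain rfl := ha'.eq_piTilde
    obtain rfl := hb'.eq_piTilde
    have hcomm : Commute (piTilde (⟨i, by omega⟩ : Fin n) ⟨i + 1, hi⟩ - 1 : Module.End ℂ _)
        (piTilde (⟨j, by omega⟩ : Fin n) ⟨j + 1, hj⟩ - 1) :=
      ((commute_piTilde (by simp [Fin.ext_iff]; omega) (by simp [Fin.ext_iff]; omega)
        (by simp [Fin.ext_iff]; omega) (by simp [Fin.ext_iff]; omega)).sub_right
          (Commute.one_right _)).sub_left (Commute.one_left _)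
    simpa using LinearMap.congr_fun hcomm.eq.symm f
  · obtain rfl := ha.eq_piTilde
    obtain rfl := hb.eq_piTilde
    obtain rfl := hc.eq_piTilde
    obtain rfl := ha'.eq_piTilde
    obtain rfl := hb'.eq_piTilde
    obtain rfl := hc'.eq_piTilde
    have hbraid := (isIdempotentElem_piTilde (R := ℂ)).sub_one_braid isIdempotentElem_piTilde
      (piTilde_braid (u := (⟨i, by omega⟩ : Fin n)) (v := ⟨i + 1, by omega⟩) (w := ⟨i + 2, hi⟩)
        (by simp [Fin.ext_iff]) (by simp [Fin.ext_iff]) (by simp [Fin.ext_iff]))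
    simpa using LinearMap.congr_fun hbraid f
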